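/- arXiv:2103.04746 — 5 statements merged into one kernel-verified Lean document; each statement's English description precedes it below -/
import Mathlib

section
/- Proposition 3.2(ii): Assume (H1) and (H2). Let x, y ∈ U_+ with x ≪ y, and let a_x ≫ x and a_y ≫ y satisfy [[x,a_x]] ∩ U_+ = ∅ and [[y,a_y]] ∩ U_+ = ∅ (as furnished by Proposition 3.2(i)). Then the two open order intervals are mutually disjoint: [[x,a_x]] ∩ [[y,a_y]] = ∅. The corresponding result holds for U_−. -/
open Set Topology Filter MeasureTheory Function

universe u

variable {E : Type u} [NormedAddCommGroup E] [NormedSpace ℝ E]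
  [MeasurableSpace E] [BorelSpace E]

/-- `x ≤ y` in the order induced by the cone `K`. -/
def coneLE (K : Set E) (x y : E) : Prop := y - x ∈ K

/-- `x < y` in the order induced by the cone `K`. -/
def coneLT (K : Set E) (x y : E) : Prop := coneLE K x y ∧ x ≠ y

/-- `x ≪ y` (strong ordering) induced by the cone `K`. -/
def coneLL (K : Set E) (x y : E) : Prop := y - x ∈ interior K

/-- `K` is a closed convex cone inducing a partial order. -/
def IsConeOrder (K : Set E) : Prop :=
  IsClosed K ∧ Convex ℝ K ∧
  (∀ x ∈ K, ∀ α : ℝ, 0 < α → α • x ∈ K) ∧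
  (∀ x ∈ K, ∀ y ∈ K, x + y ∈ K) ∧
  K ∩ (-K) = {0}

/-- Closed order interval `[a,b]`. -/
def ordCC (K : Set E) (a b : E) : Set E := {z | coneLE K a z ∧ coneLE K z b}

/-- Open order interval `[[a,b]]`. -/
def ordOO (K : Set E) (a b : E) : Set E := {z | coneLL K a z ∧ coneLL K z b}

/-- `X` is order-convex. -/
def OrderConvexSet (K X : Set E) : Prop :=
  ∀ a ∈ X, ∀ b ∈ X, coneLT K a b → ordCC K a b ⊆ X

/-- `F` is strongly monotone with respect to the cone `K`. -/
def StronglyMonotoneMap (K : Set E) (F : E → E) : Prop :=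
  ∀ x y : E, coneLT K x y → coneLL K (F x) (F y)

/-- The semi-orbit `O⁺(x)` of `x` under `F`. -/
def semiOrbit (F : E → E) (x : E) : Set E := {y | ∃ n : ℕ, y = F^[n] x}

/-- The ω-limit set of `x` under `F`. -/
def omegaSet (F : E → E) (x : E) : Set E := ⋂ k : ℕ, closure (semiOrbit F (F^[k] x))

/-- `F` is ω-compact in `S ⊆ X`. -/
def OmegaCompactIn (F : E → E) (X S : Set E) : Prop :=
  (∀ x ∈ S, IsCompact (closure (semiOrbit F x)) ∧ closure (semiOrbit F x) ⊆ X) ∧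
  IsCompact (closure (⋃ x ∈ S, omegaSet F x)) ∧ closure (⋃ x ∈ S, omegaSet F x) ⊆ X

/-- Hypothesis (H2): ω-compactness in every closed order interval of `X`. -/
def OmegaCompactIntervals (K : Set E) (F : E → E) (X : Set E) : Prop :=
  ∀ a ∈ X, ∀ b ∈ X, coneLE K a b → OmegaCompactIn F X (ordCC K a b)

/-- The upper ω-limit set `ω₊(x)`. -/
def omegaPlus (K : Set E) (F : E → E) (X : Set E) (x : E) : Set E :=
  ⋂ u ∈ {u ∈ X | coneLL K x u},
    closure (⋃ y ∈ {y ∈ X | coneLT K x y ∧ coneLE K y u}, omegaSet F y)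

/-- The lower ω-limit set `ω₋(x)`. -/
def omegaMinus (K : Set E) (F : E → E) (X : Set E) (x : E) : Set E :=
  ⋂ u ∈ {u ∈ X | coneLL K u x},
    closure (⋃ y ∈ {y ∈ X | coneLT K y x ∧ coneLE K u y}, omegaSet F y)

/-- The upper ω-unstable set `U₊`. -/
def Uplus (K : Set E) (F : E → E) (X : Set E) : Set E :=
  {x ∈ X | omegaPlus K F X x ≠ omegaSet F x}

/-- The lower ω-unstable set `U₋`. -/
def Uminus (K : Set E) (F : E → E) (X : Set E) : Set E :=
  {x ∈ X | omegaMinus K F X x ≠ omegaSet F x}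

/-- `q` is a periodic point of `F` with minimal period `p ≥ 1`. -/
def IsMinPeriodicPt (F : E → E) (p : ℕ) (q : E) : Prop :=
  1 ≤ p ∧ F^[p] q = q ∧ ∀ l : ℕ, 1 ≤ l → l < p → F^[l] q ≠ q

/-- `C` is a linearly stable cycle of `F`: the (semi-)orbit of a periodic point of some
minimal period `p` such that the spectral radius of the derivative of `F^[p]` at every
point of the cycle is at most `1`. -/
def IsLinearlyStableCycle (F : E → E) (C : Set E) : Prop :=
  ∃ (q : E) (p : ℕ), IsMinPeriodicPt F p q ∧ C = semiOrbit F q ∧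
    ∀ z ∈ semiOrbit F q, ∃ L : E →L[ℝ] E,
      HasFDerivAt (F^[p]) L z ∧ spectralRadius ℝ L ≤ 1

/-- Hypothesis (H3): `F` is C¹ and each derivative is a compact strongly positive operator. -/
def SmoothStronglyPositive (K : Set E) (F : E → E) : Prop :=
  ∃ F' : E → (E →L[ℝ] E), Continuous F' ∧ (∀ x : E, HasFDerivAt F (F' x) x) ∧
    (∀ x : E, IsCompactOperator ⇑(F' x)) ∧
    ∀ x v : E, coneLT K 0 v → coneLL K 0 (F' x v)

/-- A Borel set `W` is shy: there is a nonzero compactly supported Borel measure `μ` with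
`μ (x + W) = 0` for every `x`. -/
def IsShyBorel (W : Set E) : Prop :=
  MeasurableSet W ∧ ∃ μ : Measure E, μ ≠ 0 ∧
    (∃ Q : Set E, IsCompact Q ∧ μ Qᶜ = 0) ∧
    ∀ x : E, μ ((fun y => y - x) ⁻¹' W) = 0

/-- A set is shy if it is contained in a shy Borel set. -/
def IsShy (W : Set E) : Prop := ∃ W' : Set E, W ⊆ W' ∧ IsShyBorel W'

/-- `S` is prevalent in `A` if `A \ S` is shy. -/
def PrevalentIn (S A : Set E) : Prop := IsShy (A \ S)

/-- An order decomposition `(A, B')` of `X`: both nonempty, relatively closed in `X`,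
`A` lower closed, `B'` upper closed, `A ∪ B' = X` and `int (A ∩ B') = ∅`. -/
def IsOrderDecomp (K X A B' : Set E) : Prop :=
  A.Nonempty ∧ B'.Nonempty ∧ A ⊆ X ∧ B' ⊆ X ∧
  closure A ∩ X ⊆ A ∧ closure B' ∩ X ⊆ B' ∧
  (∀ a ∈ A, ∀ z ∈ X, coneLE K z a → z ∈ A) ∧
  (∀ b ∈ B', ∀ z ∈ X, coneLE K b z → z ∈ B') ∧
  A ∪ B' = X ∧ interior (A ∩ B') = ∅

/-- An invariant order decomposition of `X`. -/
def IsInvOrderDecomp (K X : Set E) (F : E → E) (A B' : Set E) : Prop :=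
  IsOrderDecomp K X A B' ∧ F '' A ⊆ A ∧ F '' B' ⊆ B'

/-- A set is unordered if it contains no two points `x < y`. -/
def UnorderedSet (K S : Set E) : Prop := ∀ x ∈ S, ∀ y ∈ S, ¬ coneLT K x y

/-- An invariant order resolution of `X`. -/
def IsInvOrderResolution (K X : Set E) (F : E → E) (Γ : Set (Set E × Set E)) : Prop :=
  (∀ p ∈ Γ, IsInvOrderDecomp K X F p.1 p.2) ∧
  (∀ p ∈ Γ, ∀ q ∈ Γ, p.1 ⊆ q.1 ∨ q.1 ⊆ p.1) ∧
  (∀ x ∈ X, UnorderedSet K (semiOrbit F x) → ∃ p ∈ Γ, semiOrbit F x ⊆ p.1 ∩ p.2)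

/-- Hypothesis (H4): the group `G` acts on `X` by an increasing, jointly continuous
action whose homeomorphisms commute with `F`. -/
def GroupActsOn {G : Type*} [Group G] [TopologicalSpace G]
    (K X : Set E) (F : E → E) (act : G → E → E) : Prop :=
  ContinuousOn (fun p : G × E => act p.1 p.2) (Set.univ ×ˢ X) ∧
  (∀ g : G, Set.MapsTo (act g) X X) ∧
  (∀ x ∈ X, act (1 : G) x = x) ∧
  (∀ g h : G, ∀ x ∈ X, act (g * h) x = act g (act h x)) ∧
  (∀ g : G, ∀ x ∈ X, ∀ y ∈ X, coneLE K x y → coneLE K (act g x) (act g y)) ∧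
  (∀ g : G, ∀ x ∈ X, act g (F x) = F (act g x))

/-- A set `S` is `G`-symmetric if every point of `S` is fixed by every group element. -/
def GSymmetricSet {G : Type*} (act : G → E → E) (S : Set E) : Prop :=
  ∀ z ∈ S, ∀ g : G, act g z = z

/-! A point `z` common to both intervals would give `x ≪ y ≪ z ≪ aₓ`, which puts `y ∈ U₊` into
`[[x, aₓ]]`; the step `y ≪ aₓ` rests on `int K + K ⊆ int K`. -/

theorem add_mem_interior_of_mem_interior_of_mem {α : Type*} [TopologicalSpace α] [AddGroup α]
    [ContinuousConstVAdd αᵃᵒᵖ α] {K : Set α} (hK : ∀ x ∈ K, ∀ y ∈ K, x + y ∈ K) {a b : α}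
    (ha : a ∈ interior K) (hb : b ∈ K) : a + b ∈ interior K :=
  interior_mono (Set.add_subset_iff.2 hK) (subset_interior_add_left (Set.add_mem_add ha hb))

section OrderIntervals

variable {V : Type*} [NormedAddCommGroup V] {K : Set V}

theorem coneLL_of_coneLE_of_coneLL (hK : ∀ x ∈ K, ∀ y ∈ K, x + y ∈ K) {a b c : V}
    (hab : coneLE K a b) (hbc : coneLL K b c) : coneLL K a c := by
  have h := add_mem_interior_of_mem_interior_of_mem hK hbc hab
  rwa [sub_add_sub_cancel] at h

theorem ordOO_inter_ordOO_eq_empty_of_left_mem (hK : ∀ x ∈ K, ∀ y ∈ K, x + y ∈ K)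
    {U : Set V} {x y ax ay : V} (hy : y ∈ U) (hxy : coneLL K x y)
    (hU : ordOO K x ax ∩ U = ∅) : ordOO K x ax ∩ ordOO K y ay = ∅ :=
  Set.eq_empty_of_forall_notMem fun _ ⟨⟨_, hzax⟩, hyz, _⟩ =>
    hU.subset ⟨⟨hxy, coneLL_of_coneLE_of_coneLL hK (interior_subset hyz) hzax⟩, hy⟩

theorem ordOO_inter_ordOO_eq_empty_of_right_mem (hK : ∀ x ∈ K, ∀ y ∈ K, x + y ∈ K)
    {U : Set V} {x y ax ay : V} (hy : y ∈ U) (hyx : coneLL K y x)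
    (hU : ordOO K ax x ∩ U = ∅) : ordOO K ax x ∩ ordOO K ay y = ∅ :=
  Set.eq_empty_of_forall_notMem fun _ ⟨⟨haxz, _⟩, _, hzy⟩ =>
    hU.subset ⟨⟨coneLL_of_coneLE_of_coneLL hK (interior_subset haxz) hzy, hyx⟩, hy⟩

end OrderIntervals

theorem prop32ii_general
    (K : Set E) (F : E → E) (X : Set E)
    -- (H1)
    (hK : IsConeOrder K) :
    (∀ x y ax ay : E, x ∈ Uplus K F X → y ∈ Uplus K F X → coneLL K x y →
      coneLL K x ax → coneLL K y ay →
      ordOO K x ax ∩ Uplus K F X = ∅ → ordOO K y ay ∩ Uplus K F X = ∅ →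
      ordOO K x ax ∩ ordOO K y ay = ∅) ∧
    (∀ x y ax ay : E, x ∈ Uminus K F X → y ∈ Uminus K F X → coneLL K y x →
      coneLL K ax x → coneLL K ay y →
      ordOO K ax x ∩ Uminus K F X = ∅ → ordOO K ay y ∩ Uminus K F X = ∅ →
      ordOO K ax x ∩ ordOO K ay y = ∅) :=
  ⟨fun _ _ _ _ _ hy hxy _ _ hUx _ => ordOO_inter_ordOO_eq_empty_of_left_mem hK.2.2.2.1 hy hxy hUx,
    fun _ _ _ _ _ hy hyx _ _ hUx _ =>
      ordOO_inter_ordOO_eq_empty_of_right_mem hK.2.2.2.1 hy hyx hUx⟩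

/-- Proposition 3.2(ii): under (H1) and (H2), for `x, y ∈ U₊` with `x ≪ y` and
`aₓ ≫ x`, `a_y ≫ y` furnished by Proposition 3.2(i) (so that the corresponding open
order intervals miss `U₊`), one has `[[x, aₓ]] ∩ [[y, a_y]] = ∅`;
correspondingly for `U₋`. -/
theorem prop32ii [CompleteSpace E] [TopologicalSpace.SeparableSpace E]
    (K : Set E) (F : E → E) (X : Set E)
    -- (H1)
    (hK : IsConeOrder K) (hKint : (interior K).Nonempty)
    (hFc : Continuous F) (hFm : StronglyMonotoneMap K F)
    -- (H2)
    (hXopen : IsOpen X) (hXoc : OrderConvexSet K X) (hXinv : Set.MapsTo F X X)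
    (hωc : OmegaCompactIntervals K F X) :
    (∀ x y ax ay : E, x ∈ Uplus K F X → y ∈ Uplus K F X → coneLL K x y →
      coneLL K x ax → coneLL K y ay →
      ordOO K x ax ∩ Uplus K F X = ∅ → ordOO K y ay ∩ Uplus K F X = ∅ →
      ordOO K x ax ∩ ordOO K y ay = ∅) ∧
    (∀ x y ax ay : E, x ∈ Uminus K F X → y ∈ Uminus K F X → coneLL K y x →
      coneLL K ax x → coneLL K ay y →
      ordOO K ax x ∩ Uminus K F X = ∅ → ordOO K ay y ∩ Uminus K F X = ∅ →
      ordOO K ax x ∩ ordOO K ay y = ∅) :=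
  prop32ii_general K F X hK
end

section
/- Proposition 3.3: Assume (H1) and (H2). Then both the upper ω-unstable set U_+ and the lower ω-unstable set U_− are Borel subsets of 𝔹. -/
open Set Topology Filter MeasureTheory Function

universe u

variable {E : Type u} [NormedAddCommGroup E] [NormedSpace ℝ E]
  [MeasurableSpace E] [BorelSpace E]

/-!
Fix `e ≫ 0` and, for `x ∈ X`, let `Q(x)` (`omegaAlongRay F x e`) be the upper limit of the sets
`ω(x + e/(m+1))`. Ordered points have comparable ω-limit sets, and ω-limit sets of a strongly
monotone map are unordered; with ω-compactness on `[x, x + e/(M+1)]` this gives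
`ω₊(x) = ω(x) ↔ Q(x) = ω(x)`. Both sides are closed, so they agree iff their distance functions
agree along a dense sequence `vₙ`; these distances are `liminfₖ edist vₙ (Fᵏ x)` and its `liminf`
along the ray, which are Borel functions of `x`. Reversing the cone exchanges `U₋` and `U₊`.
-/

section ConeOrder

variable {E : Type*} [NormedAddCommGroup E] {K : Set E}

theorem UnorderedSet.eq_of_coneLE {S : Set E} (hS : UnorderedSet K S) {a b : E} (ha : a ∈ S)
    (hb : b ∈ S) (hab : coneLE K a b) : a = b :=
  by_contra fun hne => hS a ha b hb ⟨hab, hne⟩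

variable [NormedSpace ℝ E]

namespace IsConeOrder

variable (hK : IsConeOrder K)
include hK

theorem zero_mem : (0 : E) ∈ K := (hK.2.2.2.2.symm.subset rfl).1

theorem smul_mem {a : E} {t : ℝ} (ht : 0 ≤ t) (ha : a ∈ K) : t • a ∈ K := by
  rcases ht.eq_or_lt with rfl | ht
  · simpa using hK.zero_mem
  · exact hK.2.2.1 a ha t ht

theorem coneLE_refl (x : E) : coneLE K x x := by
  simpa [coneLE] using hK.zero_mem

theorem coneLE_trans {x y z : E} (hxy : coneLE K x y) (hyz : coneLE K y z) : coneLE K x z := by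
  simpa [coneLE] using hK.2.2.2.1 _ hyz _ hxy

theorem coneLE_antisymm {x y : E} (hxy : coneLE K x y) (hyx : coneLE K y x) : x = y := by
  have : y - x ∈ K ∩ -K := ⟨hxy, by simpa [coneLE] using hyx⟩
  rw [hK.2.2.2.2] at this
  exact (sub_eq_zero.mp this).symm

theorem coneLE_of_le_succ {a : ℕ → E} (h : ∀ n, coneLE K (a n) (a (n + 1))) {m n : ℕ}
    (hmn : m ≤ n) : coneLE K (a m) (a n) := by
  induction n, hmn using Nat.le_induction with
  | base => exact hK.coneLE_refl _
  | succ n _ ih => exact hK.coneLE_trans ih (h n)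

open scoped Pointwise in
theorem smul_mem_interior {a : E} {t : ℝ} (ht : 0 < t) (ha : a ∈ interior K) :
    t • a ∈ interior K := by
  have hsub : t • K ⊆ K := smul_set_subset_iff.2 fun z hz => hK.2.2.1 z hz t ht
  exact interior_mono hsub (by rw [interior_smul₀ ht.ne']; exact smul_mem_smul_set ha)

theorem ne_zero_of_mem_interior [Nontrivial E] {e : E} (he : e ∈ interior K) : e ≠ 0 := by
  rintro rfl
  have hK0 : K ∈ 𝓝 (0 : E) := mem_interior_iff_mem_nhds.1 he
  have h0 : K ∩ -K ∈ 𝓝 (0 : E) := inter_mem hK0 (neg_mem_nhds_zero E hK0)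
  rw [hK.2.2.2.2, ← mem_interior_iff_mem_nhds, interior_singleton] at h0
  exact h0

theorem isClosed_setOf_coneLE : IsClosed {p : E × E | coneLE K p.1 p.2} :=
  hK.1.preimage (continuous_snd.sub continuous_fst)

theorem coneLE_of_tendsto {ι : Type*} {l : Filter ι} [l.NeBot] {a b : ι → E} {p q : E}
    (ha : Tendsto a l (𝓝 p)) (hb : Tendsto b l (𝓝 q)) (h : ∀ᶠ i in l, coneLE K (a i) (b i)) :
    coneLE K p q :=
  hK.1.mem_of_tendsto (hb.sub ha) h

end IsConeOrder

end ConeOrder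

section UpperLimit

variable {α : Type*} [TopologicalSpace α]

def upperLimit (A : ℕ → Set α) : Set α := ⋂ k, closure (⋃ n ≥ k, A n)

theorem isClosed_upperLimit (A : ℕ → Set α) : IsClosed (upperLimit A) :=
  isClosed_iInter fun _ => isClosed_closure

theorem upperLimit_subset_closure (A : ℕ → Set α) (k : ℕ) :
    upperLimit A ⊆ closure (⋃ n ≥ k, A n) :=
  iInter_subset _ k

theorem mem_upperLimit_of_tendsto {A : ℕ → Set α} {ψ : ℕ → ℕ} (hψ : Tendsto ψ atTop atTop)
    {b : ℕ → α} (hb : ∀ j, b j ∈ A (ψ j)) {β : α} (hlim : Tendsto b atTop (𝓝 β)) :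
    β ∈ upperLimit A :=
  mem_iInter.2 fun k => mem_closure_of_tendsto hlim <|
    (hψ.eventually_ge_atTop k).mono fun j hj => mem_iUnion₂.2 ⟨ψ j, hj, hb j⟩

theorem mem_upperLimit_singleton_iff {u : ℕ → α} {z : α} :
    z ∈ upperLimit (fun n => {u n}) ↔ MapClusterPt z atTop u := by
  rw [mapClusterPt_atTop_iff_forall_mem_closure, upperLimit, mem_iInter]
  simp only [image_eq_iUnion, mem_Ici, ge_iff_le]

end UpperLimit

section InfEDist

open Metric

variable {α : Type*} [PseudoEMetricSpace α]

theorem infEDist_iInter_of_antitone {s : ℕ → Set α} (hs : Antitone s) (hcl : ∀ k, IsClosed (s k))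
    {M : ℕ} (hM : IsCompact (s M)) (hne : ∀ k, (s k).Nonempty) (v : α) :
    infEDist v (⋂ k, s k) = ⨆ k, infEDist v (s k) := by
  refine le_antisymm ?_ (iSup_le fun k => infEDist_anti (iInter_subset s k))
  set L := ⨆ k, infEDist v (s k)
  have hcpt : ∀ k, IsCompact (s (k + M)) := fun k =>
    hM.of_isClosed_subset (hcl _) (hs (Nat.le_add_left M k))
  obtain ⟨z, hz⟩ : (⋂ k, s (k + M) ∩ closedEBall v L).Nonempty := by
    refine IsCompact.nonempty_iInter_of_sequence_nonempty_isCompact_isClosed _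
      (fun k => inter_subset_inter_left _ (hs (by omega))) (fun k => ?_)
      ((hcpt 0).inter_right isClosed_closedEBall) (fun k => (hcl _).inter isClosed_closedEBall)
    obtain ⟨y, hy, hyv⟩ := (hcpt k).exists_infEDist_eq_edist (hne _) v
    refine ⟨y, hy, ?_⟩
    rw [mem_closedEBall, edist_comm, ← hyv]
    exact le_iSup (fun k => infEDist v (s k)) _
  have hz' : z ∈ ⋂ k, s k := mem_iInter.2 fun k =>
    hs (Nat.le_add_right k M) (mem_iInter.1 hz k).1
  calc infEDist v (⋂ k, s k) ≤ edist v z := infEDist_le_edist_of_mem hz'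
    _ ≤ L := by rw [edist_comm]; exact (mem_iInter.1 hz 0).2

theorem infEDist_upperLimit {A : ℕ → Set α} {M : ℕ} (hM : IsCompact (closure (⋃ n ≥ M, A n)))
    (hne : ∀ n ≥ M, (A n).Nonempty) (v : α) :
    infEDist v (upperLimit A) = liminf (fun n => infEDist v (A n)) atTop := by
  have hanti : Antitone fun k => closure (⋃ n ≥ k, A n) := fun k l hkl =>
    closure_mono (biUnion_subset_biUnion_left fun n hn => le_trans hkl hn)
  rw [upperLimit, infEDist_iInter_of_antitone hanti (fun _ => isClosed_closure) hM,
    liminf_eq_iSup_iInf_of_nat]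
  · simp only [infEDist_closure, infEDist_iUnion]
  · intro k
    obtain ⟨a, ha⟩ := hne (max k M) (le_max_right _ _)
    exact ⟨a, subset_closure (mem_iUnion₂.2 ⟨_, le_max_left _ _, ha⟩)⟩

theorem eq_iff_forall_infEDist_eq {ι : Type*} {u : ι → α}
    (hu : DenseRange u) {A B : Set α} (hA : IsClosed A) (hB : IsClosed B) :
    A = B ↔ ∀ i, infEDist (u i) A = infEDist (u i) B := by
  refine ⟨fun h _ => h ▸ rfl, fun h => ?_⟩
  have := hu.equalizer continuous_infEDist continuous_infEDist (funext h)
  ext x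
  rw [mem_iff_infEDist_zero_of_closed hA, mem_iff_infEDist_zero_of_closed hB, congrFun this x]

end InfEDist

section OmegaLimit

variable {E : Type*} [NormedAddCommGroup E] {F : E → E} {y z : E}

theorem omegaSet_eq_upperLimit (F : E → E) (y : E) :
    omegaSet F y = upperLimit (fun n => {F^[n] y}) := by
  refine iInter_congr fun k => congrArg closure ?_
  ext w
  simp only [semiOrbit, mem_iUnion, mem_singleton_iff, exists_prop]
  constructor
  · rintro ⟨n, rfl⟩
    exact ⟨n + k, le_add_self, (iterate_add_apply F n k y).symm⟩
  · rintro ⟨n, hn, rfl⟩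
    exact ⟨n - k, by rw [← iterate_add_apply, Nat.sub_add_cancel hn]⟩

theorem mem_omegaSet_iff : z ∈ omegaSet F y ↔ MapClusterPt z atTop (fun n => F^[n] y) := by
  rw [omegaSet_eq_upperLimit, mem_upperLimit_singleton_iff]

theorem isClosed_omegaSet (F : E → E) (y : E) : IsClosed (omegaSet F y) :=
  isClosed_iInter fun _ => isClosed_closure

theorem omegaSet_subset_closure_semiOrbit (F : E → E) (y : E) :
    omegaSet F y ⊆ closure (semiOrbit F y) := fun _ hz =>
  isClosed_closure.mem_of_mapClusterPt (mem_omegaSet_iff.1 hz)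
    (Eventually.of_forall fun n => subset_closure ⟨n, rfl⟩)

theorem isCompact_omegaSet (hy : IsCompact (closure (semiOrbit F y))) :
    IsCompact (omegaSet F y) :=
  hy.of_isClosed_subset (isClosed_omegaSet F y) (omegaSet_subset_closure_semiOrbit F y)

theorem omegaSet_nonempty (hy : IsCompact (closure (semiOrbit F y))) : (omegaSet F y).Nonempty :=
  let ⟨z, _, hz⟩ := hy.exists_mapClusterPt_of_frequently (l := atTop) (f := fun n => F^[n] y)
    (Frequently.of_forall fun n => subset_closure ⟨n, rfl⟩)
  ⟨z, mem_omegaSet_iff.2 hz⟩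

theorem mapsTo_omegaSet (hFc : Continuous F) (y : E) : MapsTo F (omegaSet F y) (omegaSet F y) := by
  intro z hz
  have : MapClusterPt (F z) atTop ((fun n => F^[n] y) ∘ (· + 1)) := by
    simpa [Function.comp_def, iterate_succ_apply'] using
      (mem_omegaSet_iff.1 hz).continuousAt_comp hFc.continuousAt
  exact mem_omegaSet_iff.2 (this.of_comp (tendsto_add_atTop_nat 1))

theorem omegaSet_iterate (F : E → E) (y : E) (s : ℕ) : omegaSet F (F^[s] y) = omegaSet F y := by
  ext z
  simp only [mem_omegaSet_iff, ← iterate_add_apply]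
  conv_rhs => rw [← map_add_atTop_eq_nat s]
  rfl

theorem infEDist_omegaSet (hy : IsCompact (closure (semiOrbit F y))) (v : E) :
    Metric.infEDist v (omegaSet F y) = liminf (fun n => edist v (F^[n] y)) atTop := by
  have hcl : ⋃ n ≥ 0, {F^[n] y} = semiOrbit F y := by
    ext w
    simp [semiOrbit, eq_comm]
  rw [omegaSet_eq_upperLimit, infEDist_upperLimit (M := 0) (by rwa [hcl])
    (fun n _ => singleton_nonempty _)]
  simp only [Metric.infEDist_singleton]

end OmegaLimit

theorem MapClusterPt.exists_rel_of_isCompact {α : Type*} [TopologicalSpace α]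
    [FirstCountableTopology α] {R : α → α → Prop} (hR : IsClosed {p : α × α | R p.1 p.2})
    {u v : ℕ → α} (huv : ∀ n, R (u n) (v n)) {s : Set α} (hs : IsCompact s) (hv : ∀ n, v n ∈ s)
    {z : α} (hz : MapClusterPt z atTop u) : ∃ w, MapClusterPt w atTop v ∧ R z w := by
  obtain ⟨φ, hφ, hu⟩ := hz.tendsto_subseq
  obtain ⟨w, -, ψ, hψ, hv'⟩ := hs.tendsto_subseq fun n => hv (φ n)
  exact ⟨w, hv'.mapClusterPt.of_comp (hφ.comp hψ).tendsto_atTop,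
    hR.mem_of_tendsto ((hu.comp hψ.tendsto_atTop).prodMk_nhds hv')
      (Eventually.of_forall fun n => huv _)⟩

section Nonordering

variable {E : Type*} [NormedAddCommGroup E] {K : Set E} {F G : E → E} {y z z' : E}

def ConeMonotone (K : Set E) (F : E → E) : Prop :=
  ∀ x y, coneLE K x y → coneLE K (F x) (F y)

theorem ConeMonotone.iterate (hF : ConeMonotone K F) (n : ℕ) : ConeMonotone K F^[n] := by
  induction n with
  | zero => exact fun _ _ h => h
  | succ n ih =>
    intro x y h
    rw [iterate_succ_apply', iterate_succ_apply']
    exact hF _ _ (ih _ _ h)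

theorem exists_coneLL_iterate (hFc : Continuous F) (hFm : StronglyMonotoneMap K F)
    (hz : z ∈ omegaSet F y) (hz' : z' ∈ omegaSet F y) (hlt : coneLT K z z') :
    ∃ s d, 0 < d ∧ coneLL K (F^[s] y) (F^[d] (F^[s] y)) := by
  have hopen : {p : E × E | coneLL K p.1 p.2} ∈ 𝓝 (F z, F z') :=
    (isOpen_interior.preimage (continuous_snd.sub continuous_fst)).mem_nhds (hFm z z' hlt)
  obtain ⟨U, hU, V, hV, hUV⟩ := mem_nhds_prod_iff.1 hopen
  obtain ⟨s, hs⟩ := ((mem_omegaSet_iff.1 (mapsTo_omegaSet hFc y hz)).frequently hU).exists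
  obtain ⟨t, hst, ht⟩ :=
    frequently_atTop.1 ((mem_omegaSet_iff.1 (mapsTo_omegaSet hFc y hz')).frequently hV) (s + 1)
  refine ⟨s, t - s, by omega, ?_⟩
  rw [← iterate_add_apply, Nat.sub_add_cancel (by omega)]
  exact hUV (mk_mem_prod hs ht)

theorem omegaSet_subset_semiOrbit (hFc : Continuous F) {d : ℕ} (hd : 0 < d) {u ρ : E}
    (hlim : Tendsto (fun k => (F^[d])^[k] u) atTop (𝓝 ρ)) : omegaSet F u ⊆ semiOrbit F ρ := by
  intro z hz
  obtain ⟨φ, hφ, hz⟩ := (mem_omegaSet_iff.1 hz).tendsto_subseq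
  obtain ⟨i, -, hi⟩ : ∃ i ∈ Iio d, ∃ᶠ j in atTop, φ j % d = i :=
    (finite_Iio d).frequently_exists.1 (Frequently.of_forall fun j => ⟨_, Nat.mod_lt _ hd, rfl⟩)
  obtain ⟨ψ, hψ, hψi⟩ := extraction_of_frequently_atTop hi
  have hdecomp : ∀ j, F^[φ (ψ j)] u = F^[i] ((F^[d])^[φ (ψ j) / d] u) := fun j => by
    rw [← iterate_mul, ← iterate_add_apply, ← hψi j, Nat.mod_add_div]
  have hq : Tendsto (fun j => φ (ψ j) / d) atTop atTop :=
    (Nat.tendsto_div_const_atTop hd.ne').comp (hφ.comp hψ).tendsto_atTop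
  refine ⟨i, tendsto_nhds_unique (hz.comp hψ.tendsto_atTop) ?_⟩
  simpa only [Function.comp_def, hdecomp] using ((hFc.iterate i).tendsto ρ).comp (hlim.comp hq)

variable [NormedSpace ℝ E]

theorem StronglyMonotoneMap.coneMonotone (hK : IsConeOrder K) (hFm : StronglyMonotoneMap K F) :
    ConeMonotone K F := by
  intro x y h
  by_cases hxy : x = y
  · subst hxy
    exact hK.coneLE_refl _
  · exact interior_subset (hFm x y ⟨h, hxy⟩)

theorem exists_coneLE_mem_omegaSet (hK : IsConeOrder K) (hF : ConeMonotone K F) {y' : E}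
    (hyy' : coneLE K y y') (hy' : IsCompact (closure (semiOrbit F y')))
    (hz : z ∈ omegaSet F y) : ∃ z' ∈ omegaSet F y', coneLE K z z' :=
  let ⟨z', hz', hzz'⟩ := (mem_omegaSet_iff.1 hz).exists_rel_of_isCompact
    hK.isClosed_setOf_coneLE (fun n => hF.iterate n _ _ hyy') hy' fun n => subset_closure ⟨n, rfl⟩
  ⟨z', mem_omegaSet_iff.2 hz', hzz'⟩

theorem exists_mem_omegaSet_coneLE (hK : IsConeOrder K) (hF : ConeMonotone K F) {y' : E}
    (hyy' : coneLE K y y') (hy : IsCompact (closure (semiOrbit F y)))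
    (hz' : z' ∈ omegaSet F y') : ∃ z ∈ omegaSet F y, coneLE K z z' :=
  let ⟨z, hz, hzz'⟩ := (mem_omegaSet_iff.1 hz').exists_rel_of_isCompact (R := flip (coneLE K))
    (hK.isClosed_setOf_coneLE.preimage continuous_swap) (fun n => hF.iterate n _ _ hyy') hy
    fun n => subset_closure ⟨n, rfl⟩
  ⟨z, mem_omegaSet_iff.2 hz, hzz'⟩

theorem IsConeOrder.exists_tendsto_of_coneLE_succ (hK : IsConeOrder K) {a : ℕ → E}
    (ha : ∀ n, coneLE K (a n) (a (n + 1))) {s : Set E} (hs : IsCompact s) (has : ∀ n, a n ∈ s) :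
    ∃ p, Tendsto a atTop (𝓝 p) := by
  have hub : ∀ {p}, MapClusterPt p atTop a → ∀ n, coneLE K (a n) p := fun hp n =>
    (hK.1.preimage (continuous_id.sub continuous_const)).mem_of_mapClusterPt hp
      ((eventually_ge_atTop n).mono fun _ hm => hK.coneLE_of_le_succ ha hm)
  have hlb : ∀ {p q}, MapClusterPt p atTop a → MapClusterPt q atTop a → coneLE K p q :=
    fun hp hq => (hK.1.preimage (continuous_const.sub continuous_id)).mem_of_mapClusterPt hp
      (Eventually.of_forall (hub hq))
  obtain ⟨p, -, hp⟩ := hs.exists_mapClusterPt_of_frequently (l := atTop) (Frequently.of_forall has)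
  exact ⟨p, hs.tendsto_nhds_of_unique_mapClusterPt (Eventually.of_forall has)
    fun q _ hq => hK.coneLE_antisymm (hlb hq hp) (hlb hp hq)⟩

theorem exists_isFixedPt_tendsto_iterate (hK : IsConeOrder K) (hG : ConeMonotone K G)
    (hGc : Continuous G) {u : E} (hu : IsCompact (closure (semiOrbit G u)))
    (hle : coneLE K u (G u)) : ∃ ρ, IsFixedPt G ρ ∧ Tendsto (fun k => G^[k] u) atTop (𝓝 ρ) := by
  obtain ⟨ρ, hρ⟩ := hK.exists_tendsto_of_coneLE_succ
    (fun n => by simpa only [← iterate_succ_apply] using hG.iterate n _ _ hle) hu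
    fun n => subset_closure ⟨n, rfl⟩
  exact ⟨ρ, isFixedPt_of_tendsto_iterate hρ hGc.continuousAt, hρ⟩

theorem iterate_eq_self_of_coneLE (hK : IsConeOrder K) (hF : ConeMonotone K F) {p l : ℕ}
    (hz : IsPeriodicPt F p z) (hp : 0 < p) (hle : coneLE K z (F^[l] z)) : F^[l] z = z := by
  have hstep : ∀ j, coneLE K (F^[l * j] z) (F^[l * (j + 1)] z) := fun j => by
    simpa only [← iterate_add_apply, mul_add, mul_one] using hF.iterate (l * j) _ _ hle
  have := hK.coneLE_of_le_succ (a := fun j => F^[l * j] z) hstep (show 1 ≤ p from hp)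
  simp only [mul_one, (hz.const_mul l).eq] at this
  exact hK.coneLE_antisymm this hle

theorem unorderedSet_semiOrbit (hK : IsConeOrder K) (hF : ConeMonotone K F) {p : ℕ} {ρ : E}
    (hρ : IsPeriodicPt F p ρ) (hp : 0 < p) : UnorderedSet K (semiOrbit F ρ) := by
  rintro _ ⟨i, rfl⟩ _ ⟨i', rfl⟩ hlt
  have hl : F^[i' + p * i - i] (F^[i] ρ) = F^[i'] ρ := by
    rw [← iterate_add_apply, Nat.sub_add_cancel (le_add_left (Nat.le_mul_of_pos_left i hp)),
      iterate_add_apply, (hρ.mul_const i).eq]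
  rw [← hl] at hlt
  exact hlt.2 (iterate_eq_self_of_coneLE hK hF (hρ.apply_iterate i) hp hlt.1).symm

theorem unorderedSet_omegaSet (hK : IsConeOrder K) (hFc : Continuous F)
    (hFm : StronglyMonotoneMap K F) (hy : IsCompact (closure (semiOrbit F y))) :
    UnorderedSet K (omegaSet F y) := by
  intro z hz z' hz' hlt
  obtain ⟨s, d, hd, hsd⟩ := exists_coneLL_iterate hFc hFm hz hz' hlt
  have hu : IsCompact (closure (semiOrbit F^[d] (F^[s] y))) := by
    refine hy.of_isClosed_subset isClosed_closure (closure_mono ?_)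
    rintro _ ⟨k, rfl⟩
    exact ⟨d * k + s, by rw [iterate_add_apply, iterate_mul]⟩
  have hF := hFm.coneMonotone hK
  obtain ⟨ρ, hρ, hlim⟩ :=
    exists_isFixedPt_tendsto_iterate hK (hF.iterate d) (hFc.iterate d) hu (interior_subset hsd)
  rw [← omegaSet_iterate F y s] at hz hz'
  exact unorderedSet_semiOrbit hK hF hρ hd _ (omegaSet_subset_semiOrbit hFc hd hlim hz) _
    (omegaSet_subset_semiOrbit hFc hd hlim hz') hlt

end Nonordering

section Ray

variable {E : Type*} [NormedAddCommGroup E] {K : Set E} {F : E → E} {X S : Set E} {x e y : E}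

namespace OmegaCompactIn

variable (hI : OmegaCompactIn F X S)
include hI

theorem isCompact_closure_semiOrbit (hy : y ∈ S) : IsCompact (closure (semiOrbit F y)) :=
  (hI.1 y hy).1

theorem mem (hy : y ∈ S) : y ∈ X :=
  (hI.1 y hy).2 (subset_closure ⟨0, rfl⟩)

end OmegaCompactIn

theorem omegaSet_subset_closure_biUnion (hy : y ∈ S) :
    omegaSet F y ⊆ closure (⋃ w ∈ S, omegaSet F w) :=
  (subset_biUnion_of_mem hy).trans subset_closure

variable [NormedSpace ℝ E]

noncomputable def rayPt (x e : E) (m : ℕ) : E := x + (1 / ((m : ℝ) + 1)) • e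

def omegaAlongRay (F : E → E) (x e : E) : Set E :=
  upperLimit fun m => omegaSet F (rayPt x e m)

theorem isClosed_omegaAlongRay (F : E → E) (x e : E) : IsClosed (omegaAlongRay F x e) :=
  isClosed_upperLimit _

theorem tendsto_rayPt (x e : E) : Tendsto (rayPt x e) atTop (𝓝 x) := by
  unfold rayPt
  simpa using ((tendsto_one_div_add_atTop_nhds_zero_nat (𝕜 := ℝ)).smul_const e).const_add x

theorem continuous_rayPt (e : E) (m : ℕ) : Continuous fun x => rayPt x e m :=
  continuous_id.add continuous_const

theorem ne_rayPt (he : e ≠ 0) (x : E) (m : ℕ) : x ≠ rayPt x e m := by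
  simp only [rayPt, ne_eq, left_eq_add, smul_eq_zero, he, or_false]
  positivity

theorem coneLL_rayPt (hK : IsConeOrder K) (he : e ∈ interior K) (x : E) (m : ℕ) :
    coneLL K x (rayPt x e m) := by
  simpa [coneLL, rayPt] using hK.smul_mem_interior Nat.one_div_pos_of_nat he

theorem coneLE_rayPt (hK : IsConeOrder K) (he : e ∈ K) (x : E) (m : ℕ) :
    coneLE K x (rayPt x e m) := by
  simpa [coneLE, rayPt] using hK.smul_mem Nat.one_div_pos_of_nat.le he

theorem coneLE_rayPt_of_le (hK : IsConeOrder K) (he : e ∈ K) {m m' : ℕ} (h : m ≤ m') :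
    coneLE K (rayPt x e m') (rayPt x e m) := by
  have : rayPt x e m - rayPt x e m' = (1 / ((m : ℝ) + 1) - 1 / ((m' : ℝ) + 1)) • e := by
    simp only [rayPt, sub_smul]
    abel
  rw [coneLE, this]
  exact hK.smul_mem (sub_nonneg.2 (by gcongr)) he

theorem rayPt_mem_ordCC (hK : IsConeOrder K) (he : e ∈ K) {M m : ℕ} (hm : M ≤ m) :
    rayPt x e m ∈ ordCC K x (rayPt x e M) :=
  ⟨coneLE_rayPt hK he x m, coneLE_rayPt_of_le hK he hm⟩

theorem self_mem_ordCC_rayPt (hK : IsConeOrder K) (he : e ∈ K) (M : ℕ) :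
    x ∈ ordCC K x (rayPt x e M) :=
  ⟨hK.coneLE_refl x, coneLE_rayPt hK he x M⟩

end Ray

section OmegaAlongRay

variable {E : Type*} [NormedAddCommGroup E] [NormedSpace ℝ E] {K : Set E} {F : E → E}
  {X : Set E} {x e z : E} {M : ℕ}
  (hK : IsConeOrder K) (he : e ∈ interior K) (hI : OmegaCompactIn F X (ordCC K x (rayPt x e M)))
include hK he hI

theorem omegaAlongRay_subset_omegaPlus [Nontrivial E] :
    omegaAlongRay F x e ⊆ omegaPlus K F X x := by
  intro z hz
  refine mem_iInter₂.2 fun u ⟨_, hxu⟩ => ?_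
  have hle : ∀ᶠ m in atTop, coneLE K (rayPt x e m) u :=
    ((tendsto_const_nhds.sub (tendsto_rayPt x e)).eventually_mem
      (isOpen_interior.mem_nhds hxu)).mono fun _ hm => interior_subset hm
  obtain ⟨k, hk⟩ := eventually_atTop.1 (hle.and (eventually_ge_atTop M))
  refine closure_mono (iUnion₂_subset fun m hm => ?_) (upperLimit_subset_closure _ k hz)
  exact subset_biUnion_of_mem (u := omegaSet F)
    ⟨hI.mem (rayPt_mem_ordCC hK (interior_subset he) (hk m hm).2),
      ⟨interior_subset (coneLL_rayPt hK he x m), ne_rayPt (hK.ne_zero_of_mem_interior he) x m⟩,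
      (hk m hm).1⟩

theorem exists_coneLE_mem_omegaAlongRay (hF : ConeMonotone K F) {a : E}
    (ha : a ∈ omegaSet F x) : ∃ q ∈ omegaAlongRay F x e, coneLE K a q := by
  have hmem m : rayPt x e (m + M) ∈ ordCC K x (rayPt x e M) :=
    rayPt_mem_ordCC hK (interior_subset he) le_add_self
  choose q hq haq using fun m =>
    exists_coneLE_mem_omegaSet hK hF (hmem m).1 (hI.isCompact_closure_semiOrbit (hmem m)) ha
  obtain ⟨β, -, φ, hφ, hlim⟩ :=
    hI.2.1.tendsto_subseq fun m => omegaSet_subset_closure_biUnion (hmem m) (hq m)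
  exact ⟨β, mem_upperLimit_of_tendsto ((tendsto_add_atTop_nat M).comp hφ.tendsto_atTop)
    (fun j => hq (φ j)) hlim,
    hK.coneLE_of_tendsto tendsto_const_nhds hlim (Eventually.of_forall fun j => haq (φ j))⟩

theorem exists_seq_tendsto_of_mem_omegaPlus (hz : z ∈ omegaPlus K F X x) :
    ∃ w y : ℕ → E, Tendsto w atTop (𝓝 z) ∧
      ∀ m, y m ∈ ordCC K x (rayPt x e (m + M)) ∧ w m ∈ omegaSet F (y m) := by
  have hw (m : ℕ) : ∃ w, dist w z < 1 / ((m : ℝ) + 1) ∧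
      ∃ y ∈ ordCC K x (rayPt x e (m + M)), w ∈ omegaSet F y := by
    have := mem_iInter₂.1 hz (rayPt x e (m + M))
      ⟨hI.mem (rayPt_mem_ordCC hK (interior_subset he) le_add_self), coneLL_rayPt hK he x _⟩
    obtain ⟨w, hw, hwz⟩ := Metric.mem_closure_iff.1 this _ Nat.one_div_pos_of_nat
    obtain ⟨y, ⟨-, hxy, hyu⟩, hwy⟩ := mem_iUnion₂.1 hw
    exact ⟨w, by rwa [dist_comm], y, ⟨hxy.1, hyu⟩, hwy⟩
  choose w hwz y hy hwy using hw
  exact ⟨w, y, tendsto_iff_dist_tendsto_zero.2 (squeeze_zero (fun _ => dist_nonneg)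
    (fun m => (hwz m).le) tendsto_one_div_add_atTop_nhds_zero_nat), fun m => ⟨hy m, hwy m⟩⟩

theorem exists_coneLE_coneLE_of_mem_omegaPlus (hF : ConeMonotone K F)
    (hz : z ∈ omegaPlus K F X x) :
    ∃ a ∈ omegaSet F x, ∃ b ∈ omegaAlongRay F x e, coneLE K a z ∧ coneLE K z b := by
  obtain ⟨w, y, hw, hy⟩ := exists_seq_tendsto_of_mem_omegaPlus hK he hI hz
  have hmem m : rayPt x e (m + M) ∈ ordCC K x (rayPt x e M) :=
    rayPt_mem_ordCC hK (interior_subset he) le_add_self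
  have hx := self_mem_ordCC_rayPt (x := x) hK (interior_subset he) M
  choose a ha haw using fun m => exists_mem_omegaSet_coneLE hK hF (hy m).1.1
    (hI.isCompact_closure_semiOrbit hx) (hy m).2
  choose b hb hwb using fun m => exists_coneLE_mem_omegaSet hK hF (hy m).1.2
    (hI.isCompact_closure_semiOrbit (hmem m)) (hy m).2
  obtain ⟨⟨α, β⟩, ⟨hα, -⟩, φ, hφ, hlim⟩ :=
    ((isCompact_omegaSet (hI.isCompact_closure_semiOrbit hx)).prod hI.2.1).tendsto_subseq
      (x := fun m => (a m, b m)) fun m => ⟨ha m, omegaSet_subset_closure_biUnion (hmem m) (hb m)⟩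
  have hwφ := hw.comp hφ.tendsto_atTop
  refine ⟨α, hα, β, mem_upperLimit_of_tendsto ((tendsto_add_atTop_nat M).comp hφ.tendsto_atTop)
    (fun j => hb (φ j)) hlim.snd_nhds, hK.coneLE_of_tendsto hlim.fst_nhds hwφ
    (Eventually.of_forall fun j => haw (φ j)), hK.coneLE_of_tendsto hwφ hlim.snd_nhds
    (Eventually.of_forall fun j => hwb (φ j))⟩

theorem omegaPlus_eq_omegaSet_iff [Nontrivial E] (hFc : Continuous F)
    (hFm : StronglyMonotoneMap K F) :
    omegaPlus K F X x = omegaSet F x ↔ omegaAlongRay F x e = omegaSet F x := by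
  have hω := unorderedSet_omegaSet hK hFc hFm
    (hI.isCompact_closure_semiOrbit (self_mem_ordCC_rayPt hK (interior_subset he) M))
  have hF := hFm.coneMonotone hK
  have hsub := omegaAlongRay_subset_omegaPlus hK he hI
  constructor
  · intro h
    refine (hsub.trans h.subset).antisymm fun a ha => ?_
    obtain ⟨q, hq, haq⟩ := exists_coneLE_mem_omegaAlongRay hK he hI hF ha
    rwa [hω.eq_of_coneLE ha (h ▸ hsub hq) haq]
  · intro h
    refine subset_antisymm (fun z hz => ?_) (h ▸ hsub)
    obtain ⟨a, ha, b, hb, haz, hzb⟩ := exists_coneLE_coneLE_of_mem_omegaPlus hK he hI hF hz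
    obtain rfl := hω.eq_of_coneLE ha (h ▸ hb) (hK.coneLE_trans haz hzb)
    exact hK.coneLE_antisymm haz hzb ▸ ha

theorem infEDist_omegaAlongRay (v : E) :
    Metric.infEDist v (omegaAlongRay F x e) =
      liminf (fun m => liminf (fun n => edist v (F^[n] (rayPt x e m))) atTop) atTop := by
  have hmem {m} (hm : M ≤ m) := rayPt_mem_ordCC (x := x) hK (interior_subset he) hm
  rw [omegaAlongRay, infEDist_upperLimit (M := M) ?_
    fun m hm => omegaSet_nonempty (hI.isCompact_closure_semiOrbit (hmem hm))]
  · exact liminf_congr ((eventually_ge_atTop M).mono fun m hm =>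
      infEDist_omegaSet (hI.isCompact_closure_semiOrbit (hmem hm)) v)
  · exact hI.2.1.of_isClosed_subset isClosed_closure (closure_mono
      (iUnion₂_subset fun m hm => (subset_biUnion_of_mem (u := omegaSet F) (hmem hm))))

end OmegaAlongRay

section Measurability

open Metric TopologicalSpace

variable {E : Type*} [NormedAddCommGroup E] [NormedSpace ℝ E] [MeasurableSpace E] [BorelSpace E]
  {K : Set E} {F : E → E} {X : Set E}

theorem measurableSet_Uplus [Nontrivial E] [SeparableSpace E] (hK : IsConeOrder K)
    (hKint : (interior K).Nonempty) (hFc : Continuous F) (hFm : StronglyMonotoneMap K F)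
    (hXopen : IsOpen X) (hωc : OmegaCompactIntervals K F X) : MeasurableSet (Uplus K F X) := by
  obtain ⟨e, he⟩ := hKint
  let Ψ (n : ℕ) (y : E) : ENNReal := liminf (fun k => edist (denseSeq E n) (F^[k] y)) atTop
  have hΨ n : Measurable (Ψ n) :=
    .liminf fun k => (continuous_const.edist (hFc.iterate k)).measurable
  have key : ∀ x ∈ X, omegaPlus K F X x = omegaSet F x ↔
      ∀ n, liminf (fun m => Ψ n (rayPt x e m)) atTop = Ψ n x := by
    intro x hx
    obtain ⟨M, hM⟩ := ((tendsto_rayPt x e).eventually_mem (hXopen.mem_nhds hx)).exists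
    have hI := hωc x hx _ hM (coneLE_rayPt hK (interior_subset he) x M)
    rw [omegaPlus_eq_omegaSet_iff hK he hI hFc hFm, eq_iff_forall_infEDist_eq
      (denseRange_denseSeq E) (isClosed_omegaAlongRay F x e)
      (isClosed_omegaSet F x)]
    simp only [infEDist_omegaAlongRay hK he hI, Ψ, infEDist_omegaSet
      (hI.isCompact_closure_semiOrbit (self_mem_ordCC_rayPt hK (interior_subset he) M))]
  have hU : Uplus K F X = X ∩ ⋃ n, {x | liminf (fun m => Ψ n (rayPt x e m)) atTop = Ψ n x}ᶜ := by
    ext x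
    simp only [Uplus, mem_inter_iff, mem_iUnion, mem_compl_iff]
    exact and_congr_right fun hx => (not_congr (key x hx)).trans not_forall
  rw [hU]
  exact hXopen.measurableSet.inter <| .iUnion fun n => .compl <| measurableSet_eq_fun
    (.liminf fun m => (hΨ n).comp (continuous_rayPt e m).measurable) (hΨ n)

end Measurability

section Reversal

variable {E : Type*} [NormedAddCommGroup E] {K : Set E} {F : E → E} {X : Set E} {a b : E}

theorem coneLE_neg : coneLE (-K) a b ↔ coneLE K b a := by
  rw [coneLE, coneLE, Set.mem_neg, neg_sub]

theorem coneLT_neg : coneLT (-K) a b ↔ coneLT K b a := by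
  rw [coneLT, coneLT, coneLE_neg, ne_comm]

theorem interior_neg (K : Set E) : interior (-K) = -interior K :=
  ((Homeomorph.neg E).preimage_interior K).symm

theorem coneLL_neg : coneLL (-K) a b ↔ coneLL K b a := by
  rw [coneLL, coneLL, interior_neg, Set.mem_neg, neg_sub]

theorem ordCC_neg : ordCC (-K) a b = ordCC K b a := by
  ext z
  simp only [ordCC, coneLE_neg, and_comm]

theorem StronglyMonotoneMap.neg (hFm : StronglyMonotoneMap K F) : StronglyMonotoneMap (-K) F :=
  fun x y hxy => coneLL_neg.2 (hFm y x (coneLT_neg.1 hxy))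

theorem OmegaCompactIntervals.neg (hωc : OmegaCompactIntervals K F X) :
    OmegaCompactIntervals (-K) F X := fun a ha b hb hab => by
  rw [ordCC_neg]
  exact hωc b hb a ha (coneLE_neg.1 hab)

theorem Uplus_neg : Uplus (-K) F X = Uminus K F X := by
  simp only [Uplus, Uminus, omegaPlus, omegaMinus, coneLL_neg, coneLT_neg, coneLE_neg]

variable [NormedSpace ℝ E]

theorem IsConeOrder.neg (hK : IsConeOrder K) : IsConeOrder (-K) := by
  obtain ⟨hcl, hcv, hsmul, hadd, hpt⟩ := hK
  refine ⟨hcl.neg, hcv.neg, fun x hx t ht => ?_, fun x hx y hy => ?_, ?_⟩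
  · simpa [smul_neg] using hsmul _ hx t ht
  · simpa using hadd _ hy _ hx
  · rwa [neg_neg, inter_comm]

end Reversal

theorem prop33_general [TopologicalSpace.SeparableSpace E]
    (K : Set E) (F : E → E) (X : Set E)
    -- (H1)
    (hK : IsConeOrder K) (hKint : (interior K).Nonempty)
    (hFc : Continuous F) (hFm : StronglyMonotoneMap K F)
    -- (H2)
    (hXopen : IsOpen X) (hωc : OmegaCompactIntervals K F X) :
    MeasurableSet (Uplus K F X) ∧ MeasurableSet (Uminus K F X) := by
  rcases subsingleton_or_nontrivial E with _ | _
  · exact ⟨Subsingleton.measurableSet, Subsingleton.measurableSet⟩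
  refine ⟨measurableSet_Uplus hK hKint hFc hFm hXopen hωc, ?_⟩
  rw [← Uplus_neg]
  exact measurableSet_Uplus hK.neg (by rw [interior_neg]; exact hKint.neg) hFc hFm.neg hXopen
    hωc.neg

/-- Proposition 3.3: under (H1) and (H2), both `U₊` and `U₋` are Borel subsets of `E`. -/
theorem prop33 [CompleteSpace E] [TopologicalSpace.SeparableSpace E]
    (K : Set E) (F : E → E) (X : Set E)
    -- (H1)
    (hK : IsConeOrder K) (hKint : (interior K).Nonempty)
    (hFc : Continuous F) (hFm : StronglyMonotoneMap K F)
    -- (H2)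
    (hXopen : IsOpen X) (hXoc : OrderConvexSet K X) (hXinv : Set.MapsTo F X X)
    (hωc : OmegaCompactIntervals K F X) :
    MeasurableSet (Uplus K F X) ∧ MeasurableSet (Uminus K F X) :=
  prop33_general K F X hK hKint hFc hFm hXopen hωc
end

section
/- A d-hypersurface never contains two strongly ordered points: if (A,B) is an order decomposition of an order-convex open subset X of a strongly ordered Banach space 𝔹 and H = A ∩ B, then there are no points x, y ∈ H with x ≪ y. -/
open Set Topology Filter MeasureTheory Function

universe u

variable {E : Type u} [NormedAddCommGroup E] [NormedSpace ℝ E]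
  [MeasurableSpace E] [BorelSpace E]

/-!
If `x ≪ y` with `x, y ∈ A ∩ B`, the order interval `[[x, y]]` is open and contains the
midpoint of `x` and `y`. Order-convexity puts it inside `X`; lying below `y ∈ A` and above
`x ∈ B`, it lies in `A ∩ B`, which therefore has nonempty interior.
-/

open Pointwise

section ConeOrder

variable {V : Type*} [NormedAddCommGroup V] {K : Set V}

lemma IsConeOrder.smul_mem_interior_s14 [NormedSpace ℝ V] (hK : IsConeOrder K) {α : ℝ}
    (hα : 0 < α) {v : V} (hv : v ∈ interior K) : α • v ∈ interior K := by
  have hKsmul : α • K ⊆ K := by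
    rintro _ ⟨w, hw, rfl⟩
    exact hK.2.2.1 w hw α hα
  refine interior_mono hKsmul ?_
  rw [interior_smul₀ hα.ne']
  exact smul_mem_smul_set hv

lemma IsConeOrder.coneLE_antisymm_s14 [NormedSpace ℝ V] (hK : IsConeOrder K) {x y : V}
    (hxy : coneLE K x y) (hyx : coneLE K y x) : x = y := by
  have h : y - x ∈ K ∩ -K := ⟨hxy, by rw [Set.mem_neg, neg_sub]; exact hyx⟩
  rw [hK.2.2.2.2, Set.mem_singleton_iff, sub_eq_zero] at h
  exact h.symm

lemma IsConeOrder.coneLE_trans_s14 [NormedSpace ℝ V] (hK : IsConeOrder K) {x y z : V}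
    (hxy : coneLE K x y) (hyz : coneLE K y z) : coneLE K x z := by
  have h := hK.2.2.2.1 _ hyz _ hxy
  rwa [sub_add_sub_cancel] at h

lemma coneLL.coneLE {x y : V} (h : coneLL K x y) : coneLE K x y := interior_subset h

lemma isOpen_ordOO (x y : V) : IsOpen (ordOO K x y) :=
  (isOpen_interior.preimage (continuous_id.sub continuous_const)).inter
    (isOpen_interior.preimage (continuous_const.sub continuous_id))

lemma IsConeOrder.midpoint_mem_ordOO [NormedSpace ℝ V] (hK : IsConeOrder K) {x y : V}
    (hxy : coneLL K x y) :
    x + (2⁻¹ : ℝ) • (y - x) ∈ ordOO K x y := by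
  have hhalf : (2⁻¹ : ℝ) • (y - x) ∈ interior K := hK.smul_mem_interior_s14 (by norm_num) hxy
  refine ⟨by simpa only [coneLL, add_sub_cancel_left] using hhalf, ?_⟩
  have : y - (x + (2⁻¹ : ℝ) • (y - x)) = (2⁻¹ : ℝ) • (y - x) := by module
  simpa only [coneLL, this] using hhalf

lemma IsConeOrder.ordOO_subset_of_orderConvexSet [NormedSpace ℝ V] (hK : IsConeOrder K)
    {X : Set V} (hX : OrderConvexSet K X) {x y : V} (hx : x ∈ X) (hy : y ∈ X) :
    ordOO K x y ⊆ X := by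
  intro z ⟨hxz, hzy⟩
  by_cases hxy : x = y
  · subst hxy
    rwa [← hK.coneLE_antisymm_s14 hxz.coneLE hzy.coneLE]
  · exact hX x hx y hy ⟨hK.coneLE_trans_s14 hxz.coneLE hzy.coneLE, hxy⟩
      ⟨hxz.coneLE, hzy.coneLE⟩

lemma IsOrderDecomp.ordOO_subset_inter {X A B' : Set V} (hAB : IsOrderDecomp K X A B')
    {x y : V} (hx : x ∈ B') (hy : y ∈ A) (hX : ordOO K x y ⊆ X) : ordOO K x y ⊆ A ∩ B' :=
  fun z hz ↦ ⟨hAB.2.2.2.2.2.2.1 y hy z (hX hz) hz.2.coneLE,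
    hAB.2.2.2.2.2.2.2.1 x hx z (hX hz) hz.1.coneLE⟩

end ConeOrder

theorem dhypersurface_no_strongly_ordered_general
    (K : Set E) (X A B' : Set E)
    (hK : IsConeOrder K)
    (hXoc : OrderConvexSet K X)
    (hAB : IsOrderDecomp K X A B') :
    ∀ x ∈ A ∩ B', ∀ y ∈ A ∩ B', ¬ coneLL K x y := by
  rintro x ⟨hxA, hxB⟩ y ⟨hyA, -⟩ hxy
  have hsub : ordOO K x y ⊆ A ∩ B' :=
    hAB.ordOO_subset_inter hxB hyA
      (hK.ordOO_subset_of_orderConvexSet hXoc (hAB.2.2.1 hxA) (hAB.2.2.1 hyA))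
  have hmid : x + (2⁻¹ : ℝ) • (y - x) ∈ interior (A ∩ B') :=
    interior_maximal hsub (isOpen_ordOO x y) (hK.midpoint_mem_ordOO hxy)
  simp only [hAB.2.2.2.2.2.2.2.2.2, Set.mem_empty_iff_false] at hmid

/-- A d-hypersurface never contains two strongly ordered points: if `(A, B)` is an order
decomposition of an order-convex open set `X`, then no `x, y ∈ A ∩ B` satisfy `x ≪ y`. -/
theorem dhypersurface_no_strongly_ordered
    (K : Set E) (X A B' : Set E)
    (hK : IsConeOrder K) (hKint : (interior K).Nonempty)
    (hXopen : IsOpen X) (hXoc : OrderConvexSet K X)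
    (hAB : IsOrderDecomp K X A B') :
    ∀ x ∈ A ∩ B', ∀ y ∈ A ∩ B', ¬ coneLL K x y :=
  dhypersurface_no_strongly_ordered_general K X A B' hK hXoc hAB
end

section
/- If (A,B) is an order decomposition of X with nonempty boundary H = A ∩ B, then H = ∂A = ∂B, where ∂ denotes the boundary relative to X; moreover, if (A,B) is invariant (F(A) ⊆ A and F(B) ⊆ B), then H is invariant, i.e., F(H) ⊆ H. -/
open Set Topology Filter MeasureTheory Function

universe u

variable {E : Type u} [NormedAddCommGroup E] [NormedSpace ℝ E]
  [MeasurableSpace E] [BorelSpace E]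

/-!
If a point `x ∈ A ∩ B` were interior to `A`, the points `z ≫ x` close to `x` would lie in `A`
and, being above `x ∈ B`, in `B` as well; they form a nonempty open set because `x` is a limit
of them (`0 ∈ closure (int K)` for a convex cone with nonempty interior), contradicting
`int (A ∩ B) = ∅`. Conversely, a point of `X ∩ ∂A` lies in `A`, and if it missed `B`, the open
set `X \ B ⊆ A` would make it interior to `A`. The statements for `B` are the order duals.
-/

section Topology

variable {α : Type*} [TopologicalSpace α] {X A B : Set α}

theorem inter_frontier_subset_inter (hX : IsOpen X) (hAB : A ∪ B = X)
    (hA : closure A ∩ X ⊆ A) (hB : closure B ∩ X ⊆ B) : X ∩ frontier A ⊆ A ∩ B := by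
  rintro x ⟨hxX, hxA, hxIntA⟩
  refine ⟨hA ⟨hxA, hxX⟩, by_contra fun hxB => hxIntA ?_⟩
  have hcompl : X \ closure B ⊆ A := fun z ⟨hzX, hzB⟩ =>
    (hAB.symm ▸ hzX : z ∈ A ∪ B).resolve_right fun h => hzB (subset_closure h)
  exact interior_maximal hcompl (hX.sdiff isClosed_closure) ⟨hxX, fun h => hxB (hB ⟨h, hxX⟩)⟩

theorem inter_eq_inter_frontier (hX : IsOpen X) (hAX : A ⊆ X) (hAB : A ∪ B = X)
    (hA : closure A ∩ X ⊆ A) (hB : closure B ∩ X ⊆ B)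
    (hAB_int : ∀ x ∈ A ∩ B, x ∉ interior A) : A ∩ B = X ∩ frontier A :=
  Subset.antisymm (fun x hx => ⟨hAX hx.1, subset_closure hx.1, hAB_int x hx⟩)
    (inter_frontier_subset_inter hX hAB hA hB)

theorem notMem_interior_of_mem_inter {C : α → Set α} (hX : IsOpen X) (hAX : A ⊆ X)
    (hC : ∀ x, IsOpen (C x)) (hxC : ∀ x ∈ A ∩ B, x ∈ closure (C x))
    (hCB : ∀ x ∈ A ∩ B, C x ∩ X ⊆ B) (hint : interior (A ∩ B) = ∅) :
    ∀ x ∈ A ∩ B, x ∉ interior A := by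
  intro x hx hxA
  have hsub : interior A ∩ X ∩ C x ⊆ interior (A ∩ B) :=
    interior_maximal (fun z hz => ⟨interior_subset hz.1.1, hCB x hx ⟨hz.2, hz.1.2⟩⟩)
      ((isOpen_interior.inter hX).inter (hC x))
  obtain ⟨y, hy⟩ := mem_closure_iff.1 (hxC x hx) _ (isOpen_interior.inter hX) ⟨hxA, hAX hx.1⟩
  simpa [hint] using hsub hy

end Topology

section Cone

variable {V : Type*} [NormedAddCommGroup V] {K : Set V}

theorem isOpen_setOf_coneLL_left (x : V) : IsOpen {z | coneLL K x z} :=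
  isOpen_interior.preimage (continuous_sub_right x)

theorem isOpen_setOf_coneLL_right (x : V) : IsOpen {z | coneLL K z x} :=
  isOpen_interior.preimage (continuous_sub_left x)

theorem mem_closure_setOf_coneLL_left (hK : (0 : V) ∈ closure (interior K)) (x : V) :
    x ∈ closure {z | coneLL K x z} := by
  change x ∈ closure (Homeomorph.subRight x ⁻¹' interior K)
  rw [← (Homeomorph.subRight x).preimage_closure]
  simpa using hK

theorem mem_closure_setOf_coneLL_right (hK : (0 : V) ∈ closure (interior K)) (x : V) :
    x ∈ closure {z | coneLL K z x} := by
  change x ∈ closure (Homeomorph.subLeft x ⁻¹' interior K)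
  rw [← (Homeomorph.subLeft x).preimage_closure]
  simpa using hK

theorem IsConeOrder.zero_mem_closure_interior [NormedSpace ℝ V] (hK : IsConeOrder K)
    (hKint : (interior K).Nonempty) : (0 : V) ∈ closure (interior K) := by
  rw [hK.2.1.closure_interior_eq_closure_of_nonempty_interior hKint]
  have h0 : (0 : V) ∈ K ∩ -K := hK.2.2.2.2 ▸ rfl
  exact subset_closure h0.1

end Cone

theorem boundary_of_order_decomposition_general
    (K : Set E) (X A B' : Set E) (F : E → E)
    (hK : IsConeOrder K) (hKint : (interior K).Nonempty)
    (hXopen : IsOpen X)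
    (hAB : IsOrderDecomp K X A B') :
    A ∩ B' = X ∩ frontier A ∧ A ∩ B' = X ∩ frontier B' ∧
      (F '' A ⊆ A → F '' B' ⊆ B' → F '' (A ∩ B') ⊆ A ∩ B') := by
  obtain ⟨-, -, hAX, hBX, hAcl, hBcl, hAlo, hBup, hABu, hint⟩ := hAB
  have hK0 := hK.zero_mem_closure_interior hKint
  have hA : ∀ x ∈ A ∩ B', x ∉ interior A :=
    notMem_interior_of_mem_inter hXopen hAX isOpen_setOf_coneLL_left
      (fun x _ => mem_closure_setOf_coneLL_left hK0 x)
      (fun x hx z hz => hBup x hx.2 z hz.2 (interior_subset hz.1)) hint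
  have hB : ∀ x ∈ B' ∩ A, x ∉ interior B' :=
    notMem_interior_of_mem_inter hXopen hBX isOpen_setOf_coneLL_right
      (fun x _ => mem_closure_setOf_coneLL_right hK0 x)
      (fun x hx z hz => hAlo x hx.2 z hz.2 (interior_subset hz.1)) (inter_comm A B' ▸ hint)
  refine ⟨inter_eq_inter_frontier hXopen hAX hABu hAcl hBcl hA, ?_, fun hFA hFB =>
    (image_inter_subset F A B').trans (inter_subset_inter hFA hFB)⟩
  rw [inter_comm]
  exact inter_eq_inter_frontier hXopen hBX (union_comm A B' ▸ hABu) hBcl hAcl hB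

/-- If `(A, B)` is an order decomposition of `X` with nonempty boundary `H = A ∩ B`, then
`H = ∂A = ∂B` (boundary relative to `X`); moreover, invariance of `(A, B)` implies
invariance of `H`. -/
theorem boundary_of_order_decomposition
    (K : Set E) (X A B' : Set E) (F : E → E)
    (hK : IsConeOrder K) (hKint : (interior K).Nonempty)
    (hXopen : IsOpen X) (hXoc : OrderConvexSet K X) (hF : Set.MapsTo F X X)
    (hAB : IsOrderDecomp K X A B') (hne : (A ∩ B').Nonempty) :
    A ∩ B' = X ∩ frontier A ∧ A ∩ B' = X ∩ frontier B' ∧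
      (F '' A ⊆ A → F '' B' ⊆ B' → F '' (A ∩ B') ⊆ A ∩ B') :=
  boundary_of_order_decomposition_general K X A B' F hK hKint hXopen hAB
end

section
/- In a separable Banach space 𝔹, no nonempty open set is shy; equivalently, every shy set has empty interior. -/
open Set Topology Filter MeasureTheory Function

universe u

variable {E : Type u} [NormedAddCommGroup E] [NormedSpace ℝ E]
  [MeasurableSpace E] [BorelSpace E]

theorem preimage_sub_sub_mem_nhds {G : Type*} [AddGroup G] [TopologicalSpace G]
    [IsTopologicalAddGroup G] {U : Set G} {u : G} (hU : U ∈ 𝓝 u) (q : G) :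
    (fun y => y - (-u + q)) ⁻¹' U ∈ 𝓝 q :=
  (continuous_sub_right _).continuousAt.preimage_mem_nhds (by simpa [sub_eq_add_neg] using hU)

theorem MeasureTheory.Measure.eq_zero_of_translates_null {G : Type*} [AddGroup G]
    [TopologicalSpace G] [IsTopologicalAddGroup G] [MeasurableSpace G] {μ : Measure G}
    {Q U : Set G} (hQ : IsCompact Q) (hμQ : μ Qᶜ = 0) (hU : (interior U).Nonempty)
    (hnull : ∀ x, μ ((fun y => y - x) ⁻¹' U) = 0) : μ = 0 := by
  obtain ⟨u, hu⟩ := hU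
  have hQ_null : μ Q = 0 := hQ.measure_zero_of_nhdsWithin fun q _ =>
    ⟨_, mem_nhdsWithin_of_mem_nhds
      (preimage_sub_sub_mem_nhds (mem_interior_iff_mem_nhds.1 hu) q), hnull _⟩
  refine Measure.measure_univ_eq_zero.1 (nonpos_iff_eq_zero.1 ?_)
  calc μ univ ≤ μ Q + μ Qᶜ := measure_univ_le_add_compl Q
    _ = 0 := by rw [hQ_null, hμQ, add_zero]

theorem IsShy.interior_eq_empty {V : Type*} [NormedAddCommGroup V] [MeasurableSpace V]
    {W : Set V} (hW : IsShy W) : interior W = ∅ := by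
  obtain ⟨W', hWW', -, μ, hμ, ⟨Q, hQ, hμQ⟩, hnull⟩ := hW
  refine not_nonempty_iff_eq_empty.1 fun hne => hμ ?_
  exact Measure.eq_zero_of_translates_null hQ hμQ (hne.mono (interior_mono hWW')) hnull

theorem no_nonempty_open_shy_general :
    (∀ U : Set E, IsOpen U → U.Nonempty → ¬ IsShy U) ∧
    (∀ W : Set E, IsShy W → interior W = ∅) :=
  ⟨fun _ hU hne hshy => hne.ne_empty (hU.interior_eq ▸ hshy.interior_eq_empty),
    fun _ => IsShy.interior_eq_empty⟩

/-- In a separable Banach space, no nonempty open set is shy; equivalently, every shy set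
has empty interior. -/
theorem no_nonempty_open_shy [CompleteSpace E] [TopologicalSpace.SeparableSpace E] :
    (∀ U : Set E, IsOpen U → U.Nonempty → ¬ IsShy U) ∧
    (∀ W : Set E, IsShy W → interior W = ∅) :=
  no_nonempty_open_shy_general
end
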